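/- Let 𝓕 be an ω-closed family of nonempty inductive subsets of ω. Let S be a Hausdorff locally compact topological semigroup (multiplication jointly continuous) and I ⊆ S a nonempty compact two-sided ideal of S such that the complement S \ I is a subsemigroup of S isomorphic to B_ω^𝓕 (i.e., there is a multiplication-preserving bijection from B_ω^𝓕 onto S \ I). Then I is an open subset of S. -/

import Mathlib

/-- For `n : ℕ` and `F ⊆ ω`, `wShift n F` is the set `(−n)+F = {x ∈ ω : x + n ∈ F}`. -/
def wShift (n : ℕ) (F : Set ℕ) : Set ℕ := {x | x + n ∈ F}

/-- A family `𝓕` of subsets of `ω` is ω-closed if `F₁ ∩ ((−n)+F₂) ∈ 𝓕`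
for all `n ∈ ω` and `F₁, F₂ ∈ 𝓕`. -/
def OmegaClosed (𝓕 : Set (Set ℕ)) : Prop :=
  ∀ n : ℕ, ∀ F₁ ∈ 𝓕, ∀ F₂ ∈ 𝓕, F₁ ∩ wShift n F₂ ∈ 𝓕

/-- A subset `F ⊆ ω` is inductive if `n ∈ F` implies `n+1 ∈ F`. -/
def InductiveSet (F : Set ℕ) : Prop := ∀ n : ℕ, n ∈ F → n + 1 ∈ F

/-- The underlying set `ω × ω × 𝓕` of the semigroup `B_ω^𝓕`. -/
abbrev BF (𝓕 : Set (Set ℕ)) : Type := ℕ × ℕ × {F : Set ℕ // F ∈ 𝓕}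

/-- The multiplication of the semigroup `B_ω^𝓕`:
`(i₁,j₁,F₁)·(i₂,j₂,F₂) = (i₁−j₁+i₂, j₂, ((j₁−i₂)+F₁) ∩ F₂)` if `j₁ ≤ i₂`, and
`(i₁, j₁−i₂+j₂, F₁ ∩ ((i₂−j₁)+F₂))` if `j₁ ≥ i₂`. -/
def BFmul {𝓕 : Set (Set ℕ)} (h : OmegaClosed 𝓕) (a b : BF 𝓕) : BF 𝓕 :=
  if a.2.1 ≤ b.1 then
    (a.1 + (b.1 - a.2.1), b.2.1,
      ⟨wShift (b.1 - a.2.1) a.2.2.1 ∩ b.2.2.1, by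
        rw [Set.inter_comm]; exact h _ _ b.2.2.2 _ a.2.2.2⟩)
  else
    (a.1, b.2.1 + (a.2.1 - b.1),
      ⟨a.2.2.1 ∩ wShift (a.2.1 - b.1) b.2.2.1, h _ _ a.2.2.2 _ b.2.2.2⟩)


/-!
Every point of `φ(B_ω^𝓕)` is isolated in it. Indeed a nonempty inductive set is a ray
`[n, ∞)`, so all but finitely many of the other points are fixed by a translation by one of the
idempotents `(m, m, G)`, `(0, 0, F)` which moves the given point, and fixed-point sets of
continuous maps are closed. Hence `Iᶜ` is discrete, and for an open `U ⊇ I` with compact closure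
only finitely many points of `U \ I` lie outside any given open `V ⊇ I`. So injective sequences
in `U \ I` tend to `I`, and `U \ I` is invariant, up to finitely many points, under the
translations `x ↦ (1, 0, G) x` and `x ↦ x (0, 1, G)` for the largest `G ∈ 𝓕`.

If `I` were not open, `U \ I` would be infinite, hence contain a whole quadrant
`{(i + k, j + l, F)}`. The sequences `(i, j + t, F)` and `(j + t + i, j, F)` then both tend to
the compact ideal `I`, while their product is constantly `(2i, j, F) ∉ I`.
-/

open Set Filter Topology Function

theorem InductiveSet.add_mem {F : Set ℕ} (hF : InductiveSet F) {n : ℕ} (hn : n ∈ F) (k : ℕ) :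
    n + k ∈ F := by
  induction k with
  | zero => exact hn
  | succ k ih => exact hF _ ih

theorem InductiveSet.subset_wShift {F : Set ℕ} (hF : InductiveSet F) (k : ℕ) : F ⊆ wShift k F :=
  fun _ hn => hF.add_mem hn k

theorem InductiveSet.eq_Ici {F : Set ℕ} (hF : InductiveSet F) (hne : F.Nonempty) :
    F = Ici (sInf F) := by
  ext n
  refine ⟨fun hn => Nat.sInf_le hn, fun hn => ?_⟩
  simpa [Nat.add_sub_cancel' (show sInf F ≤ n from hn)] using
    hF.add_mem (Nat.sInf_mem hne) (n - sInf F)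

theorem InductiveSet.subset_of_sInf_le {F G : Set ℕ} (hG : InductiveSet G) (hne : G.Nonempty)
    (h : sInf G ≤ sInf F) : F ⊆ G := fun n hn => by
  rw [hG.eq_Ici hne]
  exact h.trans (Nat.sInf_le hn)

namespace InductiveSet

variable {𝓖 : Set (Set ℕ)} (hne : ∀ F ∈ 𝓖, F.Nonempty) (hind : ∀ F ∈ 𝓖, InductiveSet F)
include hne hind

theorem injOn_sInf : InjOn sInf 𝓖 := fun F hF G hG h =>
  ((hind G hG).subset_of_sInf_le (hne G hG) h.ge).antisymm
    ((hind F hF).subset_of_sInf_le (hne F hF) h.le)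

theorem finite_setOf_sInf_le (N : ℕ) : {F ∈ 𝓖 | sInf F ≤ N}.Finite :=
  Finite.of_finite_image ((finite_Iic N).subset (by rintro _ ⟨F, hF, rfl⟩; exact hF.2))
    ((injOn_sInf hne hind).mono (sep_subset _ _))

theorem exists_isGreatest (h𝓖 : 𝓖.Nonempty) : ∃ G, IsGreatest 𝓖 G := by
  obtain ⟨G, hG, hmin⟩ := Nat.sInf_mem (h𝓖.image sInf)
  exact ⟨G, hG, fun F hF =>
    (hind G hG).subset_of_sInf_le (hne G hG) (hmin ▸ Nat.sInf_le (mem_image_of_mem _ hF))⟩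

end InductiveSet

section Multiplication

variable {𝓕 : Set (Set ℕ)} (hcl : OmegaClosed 𝓕)

theorem BFmul_of_subset_left {i j : ℕ} {G : {F : Set ℕ // F ∈ 𝓕}} (hG : InductiveSet G.1)
    {x : BF 𝓕} (hxG : x.2.2.1 ⊆ G.1) (hj : j ≤ x.1) :
    BFmul hcl (i, j, G) x = (i + (x.1 - j), x.2.1, x.2.2) := by
  rw [BFmul, if_pos hj]
  exact Prod.ext rfl (Prod.ext rfl
    (Subtype.ext (inter_eq_right.2 (hxG.trans (hG.subset_wShift _)))))

theorem BFmul_of_subset_right {i j : ℕ} {G : {F : Set ℕ // F ∈ 𝓕}} (hG : InductiveSet G.1)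
    {x : BF 𝓕} (hxG : x.2.2.1 ⊆ G.1) (hi : i ≤ x.2.1) :
    BFmul hcl x (i, j, G) = (x.1, j + (x.2.1 - i), x.2.2) := by
  rcases hi.eq_or_lt with rfl | hi
  · rw [BFmul, if_pos le_rfl]
    simp only [Nat.sub_self, Nat.add_zero]
    exact Prod.ext rfl (Prod.ext rfl (Subtype.ext (inter_eq_left.2 hxG)))
  · rw [BFmul, if_neg hi.not_ge]
    exact Prod.ext rfl (Prod.ext rfl
      (Subtype.ext (inter_eq_left.2 (hxG.trans (hG.subset_wShift _)))))

theorem BFmul_ne_of_lt_fst {a x : BF 𝓕} (h : x.1 < a.1) : BFmul hcl a x ≠ x := by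
  intro hx
  have := congrArg Prod.fst hx
  unfold BFmul at this
  split_ifs at this <;> simp only at this <;> omega

theorem BFmul_ne_of_lt_snd {a x : BF 𝓕} (h : x.2.1 < a.2.1) : BFmul hcl x a ≠ x := by
  intro hx
  have := congrArg (·.2.1) hx
  unfold BFmul at this
  split_ifs at this <;> simp only at this <;> omega

theorem BFmul_zero_zero_ne {Fe : {F : Set ℕ // F ∈ 𝓕}} {x : BF 𝓕} (hx : x.2.2.1.Nonempty)
    (h : sInf x.2.2.1 + x.1 < sInf Fe.1) : BFmul hcl (0, 0, Fe) x ≠ x := by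
  intro hfix
  have hF : wShift x.1 Fe.1 ∩ x.2.2.1 = x.2.2.1 := by
    simpa [BFmul] using congrArg (·.2.2.1) hfix
  have hmem : sInf x.2.2.1 ∈ wShift x.1 Fe.1 ∩ x.2.2.1 := by
    rw [hF]
    exact Nat.sInf_mem hx
  exact (Nat.sInf_le (show sInf x.2.2.1 + x.1 ∈ Fe.1 from hmem.1)).not_gt h

theorem BFmul_same_set_add {F : {F : Set ℕ // F ∈ 𝓕}} (hF : InductiveSet F.1) (i j k l : ℕ) :
    BFmul hcl (i, k, F) (k + l, j, F) = (i + l, j, F) := by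
  rw [BFmul, if_pos (Nat.le_add_right k l)]
  simp only [Nat.add_sub_cancel_left]
  exact Prod.ext rfl (Prod.ext rfl (Subtype.ext (inter_eq_right.2 (hF.subset_wShift l))))

end Multiplication

theorem exists_quadrant_subset {X : Type*} {D : Set (ℕ × ℕ × X)} (hD : D.Infinite)
    (hr : {x ∈ D | (x.1 + 1, x.2) ∉ D}.Finite)
    (hu : {x ∈ D | (x.1, x.2.1 + 1, x.2.2) ∉ D}.Finite) :
    ∃ i j F, ∀ k l, (i + k, j + l, F) ∈ D := by
  set B := {x ∈ D | (x.1 + 1, x.2) ∉ D} ∪ {x ∈ D | (x.1, x.2.1 + 1, x.2.2) ∉ D}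
  have hbelow : (⋃ e ∈ B, Iic e.1 ×ˢ Iic e.2.1 ×ˢ {e.2.2}).Finite :=
    (hr.union hu).biUnion fun _ _ => (finite_Iic _).prod ((finite_Iic _).prod (finite_singleton _))
  -- a point of `D` lying below no point of `B`: its whole quadrant never leaves `D`
  obtain ⟨⟨i, j, F⟩, hx, hgood⟩ := (hD.sdiff hbelow).nonempty
  have hB : ∀ k l, (i + k, j + l, F) ∉ B := fun k l hB =>
    hgood (mem_biUnion hB ⟨by simp, by simp, rfl⟩)
  refine ⟨i, j, F, fun k l => ?_⟩
  induction l with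
  | zero =>
    induction k with
    | zero => exact hx
    | succ k ih => exact not_not.1 fun h => hB k 0 (Or.inl ⟨ih, h⟩)
  | succ l ih => exact not_not.1 fun h => hB k l (Or.inr ⟨ih, h⟩)

section Topology

variable {X : Type*} [TopologicalSpace X] {I U : Set X}

theorem isDiscrete_of_forall_notMem_closure_diff {s : Set X}
    (h : ∀ x ∈ s, x ∉ closure (s \ {x})) : IsDiscrete s :=
  isDiscrete_iff_forall_mem_exists_isOpen.2 fun x hx =>
    ⟨(closure (s \ {x}))ᶜ, isClosed_closure.isOpen_compl, by
      ext y
      refine ⟨fun ⟨hy, hys⟩ => not_not.1 fun hyx => hy (subset_closure ⟨hys, hyx⟩), ?_⟩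
      rintro rfl
      exact ⟨h y hx, hx⟩⟩

theorem notMem_closure_of_subset_fixedPoints [T2Space X] {f : X → X} (hf : Continuous f)
    {A : Set X} (hA : A ⊆ fixedPoints f) {p : X} (hp : ¬IsFixedPt f p) : p ∉ closure A :=
  fun h => hp (closure_minimal hA (isClosed_fixedPoints hf) h)

theorem finite_diff_of_isDiscrete_compl (hU : IsCompact (closure U)) (hI : IsDiscrete Iᶜ)
    {V : Set X} (hV : IsOpen V) (hIV : I ⊆ V) : (U \ V).Finite :=
  ((hU.diff hV).finite (hI.mono fun _ hx hxI => hx.2 (hIV hxI))).subset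
    (sdiff_subset_sdiff_left subset_closure)

theorem tendsto_nhdsSet_of_injective (hU : IsCompact (closure U)) (hI : IsDiscrete Iᶜ)
    {u : ℕ → X} (hu : Injective u) (huU : ∀ t, u t ∈ U) : Tendsto u atTop (𝓝ˢ I) := by
  refine (hasBasis_nhdsSet I).tendsto_right_iff.2 fun V ⟨hV, hIV⟩ => ?_
  rw [← Nat.cofinite_eq_atTop, eventually_cofinite]
  exact ((finite_diff_of_isDiscrete_compl hU hI hV hIV).preimage hu.injOn).subset
    fun t ht => ⟨huU t, ht⟩

theorem finite_setOf_mem_preimage_notMem (hU : IsCompact (closure U)) (hI : IsDiscrete Iᶜ)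
    (hUo : IsOpen U) (hIU : I ⊆ U) {α : Type*} {φ : α → X} (hφ : Injective φ) {g : X → X}
    (hg : Continuous g) (hgI : MapsTo g I I) {h : α → α} (hgh : ∀ a, φ (h a) = g (φ a)) :
    {a ∈ φ ⁻¹' U | h a ∉ φ ⁻¹' U}.Finite :=
  ((finite_diff_of_isDiscrete_compl hU hI (hUo.inter (hUo.preimage hg))
    fun _ hs => ⟨hIU hs, hIU (hgI hs)⟩).preimage hφ.injOn).subset fun a ⟨ha, ha'⟩ =>
      ⟨ha, fun hga => ha' (by rw [mem_preimage, hgh]; exact hga.2)⟩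

theorem infinite_inter_compl_of_not_isOpen [T1Space X] (hUo : IsOpen U) (hIU : I ⊆ U)
    (hI : ¬IsOpen I) : (U ∩ Iᶜ).Infinite := fun hfin => hI <| by
  have hIeq : I = U \ (U ∩ Iᶜ) := by rw [sdiff_self_inter, sdiff_compl, inter_eq_right.2 hIU]
  exact hIeq ▸ hUo.sdiff hfin.isClosed

theorem not_tendsto_const_nhdsSet [T1Space X] {α : Type*} {l : Filter α} [l.NeBot] {x : X}
    (hx : x ∈ Iᶜ) : ¬Tendsto (fun _ => x) l (𝓝ˢ I) := fun h => by
  obtain ⟨_, hxx⟩ := (h.eventually_mem (isOpen_compl_singleton.mem_nhdsSet.2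
    fun y hy (hyx : y = x) => hx (hyx ▸ hy))).exists
  exact hxx rfl

theorem Filter.Tendsto.mul_nhdsSet {α M : Type*} [Mul M] [TopologicalSpace M] [ContinuousMul M]
    {I : Set M} (hI : IsCompact I) (hII : ∀ x ∈ I, ∀ y ∈ I, x * y ∈ I) {l : Filter α}
    {u v : α → M} (hu : Tendsto u l (𝓝ˢ I)) (hv : Tendsto v l (𝓝ˢ I)) :
    Tendsto (u * v) l (𝓝ˢ I) := by
  have hmul := continuous_mul.tendsto_nhdsSet (s := I ×ˢ I) fun p hp => hII _ hp.1 _ hp.2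
  rw [hI.nhdsSet_prod_eq hI] at hmul
  exact hmul.comp (hu.prodMk hv)

end Topology

section Discreteness

variable {𝓕 : Set (Set ℕ)} (hcl : OmegaClosed 𝓕) (hne : ∀ F ∈ 𝓕, F.Nonempty)
  (hind : ∀ F ∈ 𝓕, InductiveSet F)
  {S : Type*} [Semigroup S] [TopologicalSpace S] [T2Space S] [ContinuousMul S]
  {φ : BF 𝓕 → S} (hφ : ∀ x y : BF 𝓕, φ (BFmul hcl x y) = φ x * φ y) (hinj : Injective φ)
include hne hind hφ hinj

theorem notMem_closure_image_of_sInf_gt (b : BF 𝓕) :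
    φ b ∉ closure (φ '' {x | sInf b.2.2.1 + b.1 < sInf x.2.2.1}) := by
  set 𝓖 := {F ∈ 𝓕 | sInf b.2.2.1 + b.1 < sInf F}
  rcases 𝓖.eq_empty_or_nonempty with h𝓖 | h𝓖
  · have hempty : {x : BF 𝓕 | sInf b.2.2.1 + b.1 < sInf x.2.2.1} = ∅ :=
      eq_empty_of_forall_notMem fun x hx => h𝓖.subset ⟨x.2.2.2, hx⟩
    simp [hempty]
  obtain ⟨Fb, hFb⟩ := InductiveSet.exists_isGreatest (fun F hF => hne F hF.1) (fun F hF => hind F hF.1) h𝓖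
  set w : BF 𝓕 := (0, 0, ⟨Fb, hFb.1.1⟩)
  refine notMem_closure_of_subset_fixedPoints (continuous_const_mul (φ w)) ?_ ?_
  · rintro _ ⟨x, hx, rfl⟩
    show φ w * φ x = φ x
    rw [← hφ, BFmul_of_subset_left hcl (G := ⟨Fb, hFb.1.1⟩) (hind _ hFb.1.1)
      (hFb.2 ⟨x.2.2.2, hx⟩) (Nat.zero_le _)]
    simp
  · show φ w * φ b ≠ φ b
    rw [← hφ]
    exact hinj.ne (BFmul_zero_zero_ne hcl (hne _ b.2.2.2) hFb.1.2)

theorem notMem_closure_range_diff (b : BF 𝓕) : φ b ∉ closure (range φ \ {φ b}) := by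
  obtain ⟨G, hG⟩ := InductiveSet.exists_isGreatest hne hind ⟨_, b.2.2.2⟩
  set m := max b.1 b.2.1 + 1
  set N := sInf b.2.2.1 + b.1
  set e : BF 𝓕 := (m, m, ⟨G, hG.1⟩)
  have hleft : φ b ∉ closure (φ '' {x | m ≤ x.1}) := by
    refine notMem_closure_of_subset_fixedPoints (continuous_const_mul (φ e)) ?_ ?_
    · rintro _ ⟨x, hx, rfl⟩
      show φ e * φ x = φ x
      rw [← hφ, BFmul_of_subset_left hcl (hind _ hG.1) (hG.2 x.2.2.2) hx, Nat.add_sub_cancel' hx]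
    · show φ e * φ b ≠ φ b
      rw [← hφ]
      exact hinj.ne (BFmul_ne_of_lt_fst hcl (by simp only [e, m]; omega))
  have hright : φ b ∉ closure (φ '' {x | m ≤ x.2.1}) := by
    refine notMem_closure_of_subset_fixedPoints (continuous_mul_const (φ e)) ?_ ?_
    · rintro _ ⟨x, hx, rfl⟩
      show φ x * φ e = φ x
      rw [← hφ, BFmul_of_subset_right hcl (hind _ hG.1) (hG.2 x.2.2.2) hx, Nat.add_sub_cancel' hx]
    · show φ b * φ e ≠ φ b
      rw [← hφ]
      exact hinj.ne (BFmul_ne_of_lt_snd hcl (by simp only [e, m]; omega))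
  have hsmall : (φ '' ({x | x.1 < m ∧ x.2.1 < m ∧ sInf x.2.2.1 ≤ N} \ {b})).Finite := by
    refine (((finite_Iio m).prod ((finite_Iio m).prod
      ((InductiveSet.finite_setOf_sInf_le hne hind N).preimage Subtype.val_injective.injOn))).subset
      ?_).image φ
    exact fun x hx => ⟨hx.1.1, hx.1.2.1, x.2.2.2, hx.1.2.2⟩
  have hcover : range φ \ {φ b} ⊆ φ '' {x | m ≤ x.1} ∪ φ '' {x | m ≤ x.2.1} ∪
      φ '' {x | N < sInf x.2.2.1} ∪ φ '' ({x | x.1 < m ∧ x.2.1 < m ∧ sInf x.2.2.1 ≤ N} \ {b}) := by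
    rintro _ ⟨⟨x, rfl⟩, hxb⟩
    have hxb : x ≠ b := fun h => hxb (congrArg φ h)
    by_cases h1 : m ≤ x.1
    · exact Or.inl (Or.inl (Or.inl ⟨x, h1, rfl⟩))
    by_cases h2 : m ≤ x.2.1
    · exact Or.inl (Or.inl (Or.inr ⟨x, h2, rfl⟩))
    by_cases h3 : N < sInf x.2.2.1
    · exact Or.inl (Or.inr ⟨x, h3, rfl⟩)
    · exact Or.inr ⟨x, ⟨⟨by omega, by omega, by omega⟩, hxb⟩, rfl⟩
  intro hb
  replace hb := closure_mono hcover hb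
  simp only [closure_union, hsmall.isClosed.closure_eq, mem_union] at hb
  rcases hb with ((h | h) | h) | ⟨x, ⟨-, hxb⟩, hx⟩
  · exact hleft h
  · exact hright h
  · exact notMem_closure_image_of_sInf_gt hcl hne hind hφ hinj b h
  · exact hxb (hinj hx)

theorem isDiscrete_range : IsDiscrete (range φ) :=
  isDiscrete_of_forall_notMem_closure_diff <| by
    rintro _ ⟨b, rfl⟩
    exact notMem_closure_range_diff hcl hne hind hφ hinj b

end Discreteness

theorem statement16_general (𝓕 : Set (Set ℕ)) (hcl : OmegaClosed 𝓕)
    (hne𝓕 : ∀ F ∈ 𝓕, F.Nonempty) (hind : ∀ F ∈ 𝓕, InductiveSet F)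
    {S : Type*} [Semigroup S] [TopologicalSpace S] [T2Space S] [LocallyCompactSpace S]
    [ContinuousMul S]
    (I : Set S) (hIcomp : IsCompact I)
    (hIideal : ∀ x y : S, (x ∈ I ∨ y ∈ I) → x * y ∈ I)
    (φ : BF 𝓕 → S) (hφmul : ∀ x y : BF 𝓕, φ (BFmul hcl x y) = φ x * φ y)
    (hinj : Function.Injective φ) (hrange : Set.range φ = Iᶜ) :
    IsOpen I := by
  by_contra hIopen
  have hdisc : IsDiscrete Iᶜ := hrange ▸ isDiscrete_range hcl hne𝓕 hind hφmul hinj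
  obtain ⟨U, hUo, hIU, hUc⟩ := exists_isOpen_superset_and_isCompact_closure hIcomp
  have hD : (φ ⁻¹' U).Infinite := Infinite.of_image φ <| by
    rw [image_preimage_eq_inter_range, hrange]
    exact infinite_inter_compl_of_not_isOpen hUo hIU hIopen
  obtain ⟨G, hG𝓕, hGmax⟩ := InductiveSet.exists_isGreatest hne𝓕 hind ⟨_, hD.nonempty.some.2.2.2⟩
  have hr := finite_setOf_mem_preimage_notMem hUc hdisc hUo hIU hinj
    (continuous_const_mul (φ (1, 0, ⟨G, hG𝓕⟩))) (fun s hs => hIideal _ _ (Or.inr hs))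
    (h := fun x => (x.1 + 1, x.2)) fun x => by
      rw [← hφmul, BFmul_of_subset_left hcl (hind _ hG𝓕) (hGmax x.2.2.2) (Nat.zero_le _),
        Nat.sub_zero, add_comm]
  have hu := finite_setOf_mem_preimage_notMem hUc hdisc hUo hIU hinj
    (continuous_mul_const (φ (0, 1, ⟨G, hG𝓕⟩))) (fun s hs => hIideal _ _ (Or.inl hs))
    (h := fun x => (x.1, x.2.1 + 1, x.2.2)) fun x => by
      rw [← hφmul, BFmul_of_subset_right hcl (hind _ hG𝓕) (hGmax x.2.2.2) (Nat.zero_le _),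
        Nat.sub_zero, add_comm]
  obtain ⟨i, j, F, hquad⟩ := exists_quadrant_subset hD hr hu
  have ha := tendsto_nhdsSet_of_injective hUc hdisc (u := fun t => φ (i, j + t, F))
    (hinj.comp fun t s h => by simpa using h) fun t => hquad 0 t
  have hb := tendsto_nhdsSet_of_injective hUc hdisc (u := fun t => φ (j + t + i, j, F))
    (hinj.comp fun t s h => by simpa using h) fun t => by simpa [add_comm] using hquad (j + t) 0
  have hconst : (fun t => φ (i, j + t, F)) * (fun t => φ (j + t + i, j, F)) =
      fun _ => φ (i + i, j, F) :=
    funext fun t => by rw [Pi.mul_apply, ← hφmul, BFmul_same_set_add hcl (hind _ F.2)]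
  exact not_tendsto_const_nhdsSet (hrange ▸ mem_range_self _) <|
    hconst ▸ ha.mul_nhdsSet hIcomp (fun x hx y _ => hIideal x y (Or.inl hx)) hb

/-- Theorem 3.15: let `S` be a Hausdorff locally compact topological semigroup
(jointly continuous multiplication) containing a nonempty compact two-sided ideal
`I` such that `S \ I` is a subsemigroup isomorphic to `B_ω^𝓕`, for an ω-closed
family `𝓕` of nonempty inductive subsets of `ω`. Then `I` is open. -/
theorem statement16 (𝓕 : Set (Set ℕ)) (hcl : OmegaClosed 𝓕)
    (hne𝓕 : ∀ F ∈ 𝓕, F.Nonempty) (hind : ∀ F ∈ 𝓕, InductiveSet F)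
    {S : Type*} [Semigroup S] [TopologicalSpace S] [T2Space S] [LocallyCompactSpace S]
    [ContinuousMul S]
    (I : Set S) (hIne : I.Nonempty) (hIcomp : IsCompact I)
    (hIideal : ∀ x y : S, (x ∈ I ∨ y ∈ I) → x * y ∈ I)
    (φ : BF 𝓕 → S) (hφmul : ∀ x y : BF 𝓕, φ (BFmul hcl x y) = φ x * φ y)
    (hinj : Function.Injective φ) (hrange : Set.range φ = Iᶜ) :
    IsOpen I :=
  statement16_general 𝓕 hcl hne𝓕 hind I hIcomp hIideal φ hφmul hinj hrange
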